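/- Let Γ be a finite simple graph with vertex set V = {1, …, n}, and suppose X = {1, …, m} is a clique of Γ. Then the quotient map ρ_X : P_Γ → P_m (killing all generators a_{ij} with {i,j} ⊄ {1,…,m}) fits in a split short exact sequence 1 → P_{n,m}/N → P_Γ → P_m → 1: ρ_X is surjective, admits a group-homomorphism section, and its kernel equals the subgroup of P_Γ generated by the images of the generators a_{ij} with m < j. -/

import Mathlib

abbrev PBIdx (n : ℕ) : Type := {p : Fin n × Fin n // p.1 < p.2}

namespace GraphicBraid

open scoped commutatorElement

def ofIdx {n : ℕ} {i j : Fin n} (h : i < j) : FreeGroup (PBIdx n) :=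
  FreeGroup.of ⟨(i, j), h⟩

/-- The Artin relators for the pure braid group `P_n`. -/
def pureBraidRels (n : ℕ) : Set (FreeGroup (PBIdx n)) :=
  {w | ∃ (i j r s : Fin n) (hij : i < j) (hrs : r < s),
      (s < i ∨ (i < r ∧ s < j)) ∧ w = ⁅ofIdx hij, ofIdx hrs⁆} ∪
  {w | ∃ (r i s j : Fin n) (hri : r < i) (his : i < s) (hsj : s < j),
      w = ⁅ofIdx (his.trans hsj), ofIdx hsj * ofIdx (hri.trans his) * (ofIdx hsj)⁻¹⁆} ∪
  {w | ∃ (i j r : Fin n) (hij : i < j) (hjr : j < r),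
      w = ⁅ofIdx hij * ofIdx (hij.trans hjr), ofIdx hjr⁆ ∨
      w = ⁅ofIdx hij, ofIdx (hij.trans hjr) * ofIdx hjr⁆}

/-- Relators killing the generators corresponding to non-edges of `Γ`. -/
def nonEdgeRels {n : ℕ} (Γ : SimpleGraph (Fin n)) : Set (FreeGroup (PBIdx n)) :=
  {w | ∃ p : PBIdx n, ¬ Γ.Adj p.1.1 p.1.2 ∧ w = FreeGroup.of p}

def graphicRels {n : ℕ} (Γ : SimpleGraph (Fin n)) : Set (FreeGroup (PBIdx n)) :=
  pureBraidRels n ∪ nonEdgeRels Γ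

/-- The graphic pure braid group `P_Γ`. -/
abbrev GPB {n : ℕ} (Γ : SimpleGraph (Fin n)) : Type := PresentedGroup (graphicRels Γ)

/-- The image of the Artin generator `a_{ij}` in `P_Γ`. -/
def agen {n : ℕ} (Γ : SimpleGraph (Fin n)) {i j : Fin n} (h : i < j) : GPB Γ :=
  PresentedGroup.of (rels := graphicRels Γ) ⟨(i, j), h⟩

/-- Relators killing the generators `a_{ij}` with `{i,j} ⊄ X`. -/
def killRels {n : ℕ} (X : Set (Fin n)) : Set (FreeGroup (PBIdx n)) :=
  {w | ∃ p : PBIdx n, ¬ (p.1.1 ∈ X ∧ p.1.2 ∈ X) ∧ w = FreeGroup.of p}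

/-- The quotient `P_X` of `P_Γ` obtained by killing all generators `a_{ij}` with `{i,j} ⊄ X`. -/
abbrev GPBX {n : ℕ} (Γ : SimpleGraph (Fin n)) (X : Set (Fin n)) : Type :=
  PresentedGroup (graphicRels Γ ∪ killRels X)

/-- The canonical surjection between presented groups when the set of relators grows. -/
def quotMap {α : Type*} {R S : Set (FreeGroup α)} (h : R ⊆ S) :
    PresentedGroup R →* PresentedGroup S :=
  QuotientGroup.map _ _ (MonoidHom.id _)
    (fun _ hx => Subgroup.normalClosure_mono h hx)

/-- The quotient map `ρ_X : P_Γ → P_X`. -/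
def rho {n : ℕ} (Γ : SimpleGraph (Fin n)) (X : Set (Fin n)) : GPB Γ →* GPBX Γ X :=
  quotMap Set.subset_union_left

lemma killRels_anti {n : ℕ} {X Y : Set (Fin n)} (h : X ⊆ Y) : killRels Y ⊆ killRels X := by
  rintro w ⟨p, hp, rfl⟩
  exact ⟨p, fun hx => hp ⟨h hx.1, h hx.2⟩, rfl⟩

/-- The quotient map `P_Y → P_X` for `X ⊆ Y`. -/
def rhoDown {n : ℕ} (Γ : SimpleGraph (Fin n)) {X Y : Set (Fin n)} (h : X ⊆ Y) :
    GPBX Γ Y →* GPBX Γ X :=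
  quotMap (Set.union_subset_union_right _ (killRels_anti h))

/-- `X` is a maximal clique of `Γ`. -/
def MaxClique {n : ℕ} (Γ : SimpleGraph (Fin n)) (X : Set (Fin n)) : Prop :=
  Γ.IsClique X ∧ ∀ Y : Set (Fin n), Γ.IsClique Y → X ⊆ Y → Y = X


/-- The subgroup of `P_Γ` generated by the generators `a_{ij}` with `{i,j} ⊆ X`. -/
def cliqueSubgroup {n : ℕ} (Γ : SimpleGraph (Fin n)) (X : Set (Fin n)) : Subgroup (GPB Γ) :=
  Subgroup.closure {g : GPB Γ | ∃ p : PBIdx n, (p.1.1 ∈ X ∧ p.1.2 ∈ X) ∧ g = PresentedGroup.of p}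

/-- The bipartite incidence graph of edges and 3-cliques (triangles) of `Γ`. -/
def incidenceGraph {n : ℕ} (Γ : SimpleGraph (Fin n)) :
    SimpleGraph (Γ.edgeSet ⊕ {T : Finset (Fin n) // Γ.IsNClique 3 T}) where
  Adj x y :=
    match x, y with
    | Sum.inl e, Sum.inr T => ∀ v : Fin n, v ∈ (e : Sym2 (Fin n)) → v ∈ T.1
    | Sum.inr T, Sum.inl e => ∀ v : Fin n, v ∈ (e : Sym2 (Fin n)) → v ∈ T.1
    | _, _ => False
  symm := ⟨by rintro (e | T) (f | S) h <;> exact h⟩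
  loopless := ⟨by rintro (e | T) h <;> exact h⟩

end GraphicBraid

/-!
The section sends `a_{ij}` to itself when `j < m` and to `1` otherwise. It respects the relations
because every Artin relator either involves only generators with `j < m` or collapses to a
commutator with `1` once the others are killed. The kernel of `ρ_X` is the normal closure of the
`a_{ij}` with `m ≤ j`; the subgroup they generate is already normal, since by the Artin relations
the conjugate of such a generator by any `a_{rs}^{±1}` is a word in generators of the same kind.
-/

section ConjugationLemmas

variable {G : Type*} [Group G]

theorem Subgroup.mem_normalizer_closure_of_conj_mem {S : Set G} {t : G}
    (h : ∀ s ∈ S, t * s * t⁻¹ ∈ closure S ∧ t⁻¹ * s * t ∈ closure S) :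
    t ∈ normalizer (closure S : Set G) := by
  rw [mem_normalizer_iff_map_conj_eq, MonoidHom.map_closure]
  refine le_antisymm ((closure_le _).mpr ?_) ((closure_le _).mpr fun s hs => ?_)
  · rintro _ ⟨s, hs, rfl⟩
    exact (h s hs).1
  · rw [← MonoidHom.map_closure]
    exact ⟨t⁻¹ * s * t, (h s hs).2, by simp [MulAut.conj_apply, mul_assoc]⟩

theorem Subgroup.conj_mem_of_commute_mul {H : Subgroup G} {a b c : G}
    (habc : Commute (a * b) c) (hbca : Commute a (b * c)) (hb : b ∈ H) (hc : c ∈ H) :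
    (a * b * a⁻¹ ∈ H ∧ a⁻¹ * b * a ∈ H) ∧ (a * c * a⁻¹ ∈ H ∧ a⁻¹ * c * a ∈ H) := by
  have hbc : b * c ∈ H := mul_mem hb hc
  have e₁ : a⁻¹ * c * a = b * c * b⁻¹ := by
    calc a⁻¹ * c * a = b * ((a * b)⁻¹ * c * (a * b)) * b⁻¹ := by group
      _ = b * c * b⁻¹ := by rw [habc.inv_mul_cancel]
  have e₂ : a * b * a⁻¹ = c⁻¹ * b * c := by
    calc a * b * a⁻¹ = c⁻¹ * (a * b) * c * a⁻¹ := by rw [habc.symm.inv_mul_cancel]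
      _ = c⁻¹ * (a * (b * c) * a⁻¹) := by group
      _ = c⁻¹ * (b * c) := by rw [hbca.mul_inv_cancel]
      _ = c⁻¹ * b * c := by group
  have e₃ : a⁻¹ * b * a = b * c * (a⁻¹ * c * a)⁻¹ := by
    calc a⁻¹ * b * a = a⁻¹ * (b * c) * a * (a⁻¹ * c * a)⁻¹ := by group
      _ = _ := by rw [hbca.inv_mul_cancel]
  have e₄ : a * c * a⁻¹ = (a * b * a⁻¹)⁻¹ * (b * c) := by
    calc a * c * a⁻¹ = (a * b * a⁻¹)⁻¹ * (a * (b * c) * a⁻¹) := by group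
      _ = _ := by rw [hbca.mul_inv_cancel]
  have h₁ : a⁻¹ * c * a ∈ H := e₁ ▸ mul_mem hbc (inv_mem hb)
  have h₂ : a * b * a⁻¹ ∈ H := e₂ ▸ mul_mem (mul_mem (inv_mem hc) hb) hc
  exact ⟨⟨h₂, e₃ ▸ mul_mem hbc (inv_mem h₁)⟩, ⟨e₄ ▸ mul_mem (inv_mem h₂) hbc, h₁⟩⟩

/-- Conjugation by `d` is read off from conjugation by `f`, because `f⁻¹ * e * f` commutes with
`d`. -/
theorem Subgroup.conj_mem_of_commute_conj {H : Subgroup G} {d e f : G}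
    (h : Commute e (f * d * f⁻¹)) (he : e ∈ H) (hf : f ∈ H) (hdf : d * f * d⁻¹ ∈ H) :
    d * e * d⁻¹ ∈ H := by
  have hd : Commute d (f⁻¹ * e * f) := by simpa [mul_assoc] using (h.conj f⁻¹).symm
  have key : d * e * d⁻¹ = d * f * d⁻¹ * (f⁻¹ * e * f) * (d * f * d⁻¹)⁻¹ := by
    calc d * e * d⁻¹ = d * f * d⁻¹ * (d * (f⁻¹ * e * f) * d⁻¹) * (d * f * d⁻¹)⁻¹ := by group
      _ = _ := by rw [hd.mul_inv_cancel]
  rw [key]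
  exact mul_mem (mul_mem hdf (mul_mem (mul_mem (inv_mem hf) he) hf)) (inv_mem hdf)

end ConjugationLemmas

namespace GraphicBraid

open scoped commutatorElement

theorem quotMap_surjective {α : Type*} {R S : Set (FreeGroup α)} (h : R ⊆ S) :
    Function.Surjective (quotMap h) :=
  QuotientGroup.map_surjective_of_surjective _ _ _ QuotientGroup.mk_surjective _

theorem ker_quotMap {α : Type*} {R S : Set (FreeGroup α)} (h : R ⊆ S) :
    (quotMap h).ker = Subgroup.normalClosure (PresentedGroup.mk R '' S) := by
  refine (QuotientGroup.ker_map _ _ _ _).trans ?_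
  rw [Subgroup.comap_id]
  exact Subgroup.map_normalClosure _ _ QuotientGroup.mk_surjective

section

variable {n : ℕ} (Γ : SimpleGraph (Fin n))

theorem commute_agen_agen {i j r s : Fin n} (hij : i < j) (hrs : r < s)
    (h : s < i ∨ (i < r ∧ s < j)) : Commute (agen Γ hij) (agen Γ hrs) := by
  have := PresentedGroup.one_of_mem (rels := graphicRels Γ)
    (Or.inl (Or.inl (Or.inl ⟨i, j, r, s, hij, hrs, h, rfl⟩)))
  rwa [map_commutatorElement, commutatorElement_eq_one_iff_commute] at this

theorem commute_agen_conj {r i s j : Fin n} (hri : r < i) (his : i < s) (hsj : s < j) :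
    Commute (agen Γ (his.trans hsj)) (agen Γ hsj * agen Γ (hri.trans his) * (agen Γ hsj)⁻¹) := by
  have := PresentedGroup.one_of_mem (rels := graphicRels Γ)
    (Or.inl (Or.inl (Or.inr ⟨r, i, s, j, hri, his, hsj, rfl⟩)))
  rwa [map_commutatorElement, map_mul, map_mul, map_inv,
    commutatorElement_eq_one_iff_commute] at this

theorem commute_agen_mul_agen {i j k : Fin n} (hij : i < j) (hjk : j < k) :
    Commute (agen Γ hij * agen Γ (hij.trans hjk)) (agen Γ hjk) := by
  have := PresentedGroup.one_of_mem (rels := graphicRels Γ)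
    (Or.inl (Or.inr ⟨i, j, k, hij, hjk, Or.inl rfl⟩))
  rwa [map_commutatorElement, map_mul, commutatorElement_eq_one_iff_commute] at this

theorem commute_agen_agen_mul {i j k : Fin n} (hij : i < j) (hjk : j < k) :
    Commute (agen Γ hij) (agen Γ (hij.trans hjk) * agen Γ hjk) := by
  have := PresentedGroup.one_of_mem (rels := graphicRels Γ)
    (Or.inl (Or.inr ⟨i, j, k, hij, hjk, Or.inr rfl⟩))
  rwa [map_commutatorElement, map_mul, commutatorElement_eq_one_iff_commute] at this

/-- The image in `P_Γ` of `P_{n,m}`; vertices are numbered from `0`, so `m ≤ j` is the paper's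
`m < j`. -/
def tailSubgroup (m : ℕ) : Subgroup (GPB Γ) :=
  Subgroup.closure {g : GPB Γ | ∃ p : PBIdx n, m ≤ (p.1.2 : ℕ) ∧ g = PresentedGroup.of p}

variable {Γ} {m : ℕ}

theorem agen_mem_tailSubgroup {i j : Fin n} (h : i < j) (hj : m ≤ (j : ℕ)) :
    agen Γ h ∈ tailSubgroup Γ m :=
  Subgroup.subset_closure ⟨⟨(i, j), h⟩, hj, rfl⟩

theorem conj_mem_tailSubgroup_of_lt_of_lt {r s j : Fin n} (hrs : r < s) (hsj : s < j)
    (hj : m ≤ (j : ℕ)) :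
    let a := agen Γ hrs; let b := agen Γ (hrs.trans hsj); let c := agen Γ hsj
    (a * b * a⁻¹ ∈ tailSubgroup Γ m ∧ a⁻¹ * b * a ∈ tailSubgroup Γ m) ∧
    (a * c * a⁻¹ ∈ tailSubgroup Γ m ∧ a⁻¹ * c * a ∈ tailSubgroup Γ m) :=
  Subgroup.conj_mem_of_commute_mul (commute_agen_mul_agen Γ hrs hsj)
    (commute_agen_agen_mul Γ hrs hsj) (agen_mem_tailSubgroup _ hj) (agen_mem_tailSubgroup _ hj)

theorem conj_agen_mem_tailSubgroup {i j r s : Fin n} (hij : i < j) (hrs : r < s)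
    (hj : m ≤ (j : ℕ)) :
    agen Γ hrs * agen Γ hij * (agen Γ hrs)⁻¹ ∈ tailSubgroup Γ m ∧
    (agen Γ hrs)⁻¹ * agen Γ hij * agen Γ hrs ∈ tailSubgroup Γ m := by
  have hE := agen_mem_tailSubgroup (Γ := Γ) hij hj
  by_cases hs : m ≤ (s : ℕ)
  · have hD := agen_mem_tailSubgroup (Γ := Γ) hrs hs
    exact ⟨mul_mem (mul_mem hD hE) (inv_mem hD), mul_mem (mul_mem (inv_mem hD) hE) hD⟩
  have hsj : s < j := by rw [Fin.lt_def]; omega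
  rcases lt_trichotomy s i with hsi | rfl | his
  · have hc := commute_agen_agen Γ hij hrs (Or.inl hsi)
    exact ⟨by rwa [hc.symm.mul_inv_cancel], by rwa [hc.symm.inv_mul_cancel]⟩
  · exact (conj_mem_tailSubgroup_of_lt_of_lt hrs hij hj).2
  rcases lt_trichotomy r i with hri | rfl | hir
  · have hc := commute_agen_conj Γ hri his hsj
    obtain ⟨hDF, hDF'⟩ := (conj_mem_tailSubgroup_of_lt_of_lt (Γ := Γ) hrs hsj hj).2
    have hF := agen_mem_tailSubgroup (Γ := Γ) hsj hj
    refine ⟨Subgroup.conj_mem_of_commute_conj hc hE hF hDF, ?_⟩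
    have hc' : Commute (agen Γ hij) (agen Γ hsj * (agen Γ hrs)⁻¹ * (agen Γ hsj)⁻¹) := by
      simpa [mul_assoc] using hc.inv_right
    simpa using Subgroup.conj_mem_of_commute_conj hc' hE hF (by simpa using hDF')
  · exact (conj_mem_tailSubgroup_of_lt_of_lt hrs hsj hj).1
  · have hc := commute_agen_agen Γ hij hrs (Or.inr ⟨hir, hsj⟩)
    exact ⟨by rwa [hc.symm.mul_inv_cancel], by rwa [hc.symm.inv_mul_cancel]⟩

theorem tailSubgroup_normal : (tailSubgroup Γ m).Normal := by
  rw [← Subgroup.normalizer_eq_top_iff, eq_top_iff]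
  intro g _
  refine PresentedGroup.generated_by _ _ (fun ⟨⟨r, s⟩, hrs⟩ => ?_) g
  refine Subgroup.mem_normalizer_closure_of_conj_mem ?_
  rintro _ ⟨⟨⟨i, j⟩, hij⟩, hj, rfl⟩
  exact conj_agen_mem_tailSubgroup hij hrs hj

def truncate (m : ℕ) : FreeGroup (PBIdx n) →* FreeGroup (PBIdx n) :=
  FreeGroup.lift fun p => if (p.1.2 : ℕ) < m then FreeGroup.of p else 1

theorem truncate_of (p : PBIdx n) :
    truncate m (FreeGroup.of p) = if (p.1.2 : ℕ) < m then FreeGroup.of p else 1 :=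
  FreeGroup.lift_apply_of

theorem truncate_ofIdx {i j : Fin n} (h : i < j) :
    truncate m (ofIdx h) = if (j : ℕ) < m then ofIdx h else 1 :=
  truncate_of _

theorem truncate_eq_one_or_self {w : FreeGroup (PBIdx n)} (hw : w ∈ graphicRels Γ) :
    truncate m w = 1 ∨ truncate m w = w := by
  rcases hw with (((⟨i, j, r, s, hij, hrs, -, rfl⟩ | ⟨r, i, s, j, hri, his, hsj, rfl⟩) |
      ⟨i, j, r, hij, hjr, rfl | rfl⟩) | ⟨p, -, rfl⟩)
  all_goals
    simp only [map_commutatorElement, map_mul, map_inv, truncate_ofIdx, truncate_of]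
    split_ifs <;> first | omega | simp

theorem not_lt_and_lt_iff (p : PBIdx n) :
    ¬((p.1.1 : ℕ) < m ∧ (p.1.2 : ℕ) < m) ↔ m ≤ (p.1.2 : ℕ) := by
  have := Fin.lt_def.mp p.2
  omega

theorem mk_truncate_eq_one {w : FreeGroup (PBIdx n)}
    (hw : w ∈ graphicRels Γ ∪ killRels {v : Fin n | (v : ℕ) < m}) :
    PresentedGroup.mk (graphicRels Γ) (truncate m w) = 1 := by
  rcases hw with hw | ⟨p, hp, rfl⟩
  · rcases truncate_eq_one_or_self hw with h | h <;> rw [h]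
    exacts [map_one _, PresentedGroup.one_of_mem hw]
  · rw [truncate_of, if_neg ((not_lt_and_lt_iff p).mp hp).not_gt, map_one]

variable (Γ m) in
def truncateSection : GPBX Γ {v : Fin n | (v : ℕ) < m} →* GPB Γ :=
  QuotientGroup.lift _ ((PresentedGroup.mk (graphicRels Γ)).comp (truncate m))
    (Subgroup.normalClosure_le_normal fun _ hw => mk_truncate_eq_one hw)

theorem rho_comp_truncateSection :
    (rho Γ {v : Fin n | (v : ℕ) < m}).comp (truncateSection Γ m) = MonoidHom.id _ := by
  refine PresentedGroup.ext fun p => ?_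
  change rho Γ _ (PresentedGroup.mk _ (truncate m (FreeGroup.of p))) = PresentedGroup.of p
  rw [truncate_of]
  split_ifs with hp
  · rfl
  · rw [map_one, map_one]
    exact (PresentedGroup.one_of_mem
      (Or.inr ⟨p, (not_lt_and_lt_iff p).mpr (not_lt.mp hp), rfl⟩)).symm

theorem ker_rho_eq_tailSubgroup : (rho Γ {v : Fin n | (v : ℕ) < m}).ker = tailSubgroup Γ m := by
  have := tailSubgroup_normal (Γ := Γ) (m := m)
  rw [rho, ker_quotMap]
  refine le_antisymm (Subgroup.normalClosure_le_normal ?_) ((Subgroup.closure_le _).mpr ?_)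
  · rintro _ ⟨w, hw | ⟨p, hp, rfl⟩, rfl⟩
    · rw [PresentedGroup.one_of_mem hw]
      exact one_mem _
    · exact Subgroup.subset_closure ⟨p, (not_lt_and_lt_iff p).mp hp, rfl⟩
  · rintro _ ⟨p, hp, rfl⟩
    exact Subgroup.subset_normalClosure
      ⟨FreeGroup.of p, Or.inr ⟨p, (not_lt_and_lt_iff p).mpr hp, rfl⟩, rfl⟩

end

theorem clique_deletion_split_exact_general {n m : ℕ} (Γ : SimpleGraph (Fin n)) :
    Function.Surjective (rho Γ {v : Fin n | (v : ℕ) < m}) ∧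
    (∃ s : GPBX Γ {v : Fin n | (v : ℕ) < m} →* GPB Γ,
      (rho Γ {v : Fin n | (v : ℕ) < m}).comp s = MonoidHom.id _) ∧
    MonoidHom.ker (rho Γ {v : Fin n | (v : ℕ) < m}) =
      Subgroup.closure
        {g : GPB Γ | ∃ p : PBIdx n, m ≤ (p.1.2 : ℕ) ∧ g = PresentedGroup.of p} :=
  ⟨quotMap_surjective _, ⟨truncateSection Γ m, rho_comp_truncateSection⟩, ker_rho_eq_tailSubgroup⟩

/-- If `X = {1, …, m}` is a clique of `Γ`, then `ρ_X : P_Γ → P_m` is a split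
surjection whose kernel is the subgroup generated by the images of the generators `a_{ij}`
with `m < j`. -/
theorem clique_deletion_split_exact {n m : ℕ} (Γ : SimpleGraph (Fin n)) (hm : m ≤ n)
    (hclique : Γ.IsClique {v : Fin n | (v : ℕ) < m}) :
    Function.Surjective (rho Γ {v : Fin n | (v : ℕ) < m}) ∧
    (∃ s : GPBX Γ {v : Fin n | (v : ℕ) < m} →* GPB Γ,
      (rho Γ {v : Fin n | (v : ℕ) < m}).comp s = MonoidHom.id _) ∧
    MonoidHom.ker (rho Γ {v : Fin n | (v : ℕ) < m}) =
      Subgroup.closure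
        {g : GPB Γ | ∃ p : PBIdx n, m ≤ (p.1.2 : ℕ) ∧ g = PresentedGroup.of p} :=
  clique_deletion_split_exact_general Γ

end GraphicBraid
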